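/- Fix d ≥ 1, a nonzero vector μ ∈ ℝ^d, σ > 0, and p ∈ (1/2, 1). Let f(·; m, σ²I) denote the N(m, σ²I) density and let X be distributed as N(μ, σ²I). Then Pr[f(X; μ, σ²I) < p·f(X; −μ, σ²I) or f(X; μ, σ²I) < (1−p)·f(X; 3μ, σ²I)] ≤ Φ(−‖μ‖/σ + σ·ln p/(2‖μ‖)) + Φ(−‖μ‖/σ + σ·ln(1−p)/(2‖μ‖)). -/

import Mathlib

open MeasureTheory Real Set ProbabilityTheory
open scoped ENNReal RealInnerProductSpace

/-- The standard normal cumulative distribution function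
`Φ(z) = ∫_{−∞}^z (1/√(2π)) e^{−u²/2} du`. -/
noncomputable def stdNormCDF (z : ℝ) : ℝ :=
  ∫ u in Set.Iic z, (1 / Real.sqrt (2 * Real.pi)) * Real.exp (-u ^ 2 / 2)
/-- Density of the `d`-dimensional Gaussian `N(m, σ²I)`:
`f(x; m, σ²I) = (2πσ²)^{−d/2} exp(−‖x−m‖²/(2σ²))`. -/
noncomputable def gaussPdf (d : ℕ) (m : EuclideanSpace ℝ (Fin d)) (σ : ℝ)
    (x : EuclideanSpace ℝ (Fin d)) : ℝ :=
  (2 * Real.pi * σ ^ 2) ^ (-(d : ℝ) / 2) * Real.exp (-‖x - m‖ ^ 2 / (2 * σ ^ 2))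

/-- The `d`-dimensional Gaussian measure `N(m, σ²I)` on `ℝ^d`. -/
noncomputable def gauss (d : ℕ) (m : EuclideanSpace ℝ (Fin d)) (σ : ℝ) :
    Measure (EuclideanSpace ℝ (Fin d)) :=
  volume.withDensity fun x => ENNReal.ofReal (gaussPdf d m σ x)

/-! The density `gaussPdf d m σ` factors over coordinates, so `gauss d m σ` is the image of the
standard Gaussian under `z ↦ m + σ z`, and its push-forward under `x ↦ ⟪u, x⟫` is the real
Gaussian `N(⟪u, m⟫, σ²‖u‖²)`. Comparing two densities with the same `σ` is a half-space condition:
`f(x; μ) < p f(x; -μ)` iff `⟪μ, x⟫ < σ² ln p / 2`, and `f(x; μ) < (1 - p) f(x; 3μ)` iff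
`⟪μ, x⟫ > 2‖μ‖² - σ² ln (1 - p) / 2`. Under `N(μ, σ²I)` these half-spaces have the two
probabilities on the right-hand side, and the union bound concludes. -/

theorem MeasureTheory.Measure.pi_withDensity_ofReal {ι α : Type*} [Fintype ι]
    [MeasurableSpace α] (μ : ι → Measure α) [∀ i, SigmaFinite (μ i)] {f : ι → α → ℝ}
    (hf₀ : ∀ i x, 0 ≤ f i x) (hf : ∀ i, Integrable (f i) (μ i)) :
    Measure.pi (fun i => (μ i).withDensity fun x => ENNReal.ofReal (f i x)) =
      (Measure.pi μ).withDensity fun y => ENNReal.ofReal (∏ i, f i (y i)) := by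
  have := fun i => isFiniteMeasure_withDensity_ofReal (hf i).2
  refine Measure.pi_eq fun s hs => ?_
  rw [withDensity_apply _ (MeasurableSet.univ_pi hs), Measure.restrict_pi_pi,
    ← ofReal_integral_eq_lintegral_ofReal (Integrable.fintype_prod fun i => (hf i).restrict)
      (ae_of_all _ fun y => Finset.prod_nonneg fun i _ => hf₀ i (y i)),
    integral_fintype_prod_eq_prod,
    ENNReal.ofReal_prod_of_nonneg fun i _ => integral_nonneg (hf₀ i)]
  refine Finset.prod_congr rfl fun i _ => ?_
  rw [withDensity_apply _ (hs i),
    ofReal_integral_eq_lintegral_ofReal (hf i).restrict (ae_of_all _ (hf₀ i))]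

theorem gaussianReal_zero_one_map_affine (a b : ℝ) :
    (gaussianReal 0 1).map (fun t => a + b * t) = gaussianReal a (b ^ 2).toNNReal := by
  have h : (fun t => a + b * t) = (fun t => a + t) ∘ (fun t => b * t) := rfl
  rw [h, ← Measure.map_map (by fun_prop) (by fun_prop), gaussianReal_map_const_mul,
    gaussianReal_map_const_add]
  congr 1
  · ring
  · ext
    simp [sq_nonneg]

section stdNormCDF

theorem stdNormCDF_nonneg (z : ℝ) : 0 ≤ stdNormCDF z :=
  integral_nonneg fun u => by positivity

theorem ofReal_stdNormCDF_eq_gaussianReal_Iio (z : ℝ) :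
    ENNReal.ofReal (stdNormCDF z) = gaussianReal 0 1 (Iio z) := by
  rw [gaussianReal_apply_eq_integral _ one_ne_zero, stdNormCDF, integral_Iic_eq_integral_Iio]
  simp [gaussianPDFReal_def]

theorem ofReal_stdNormCDF_neg_eq_gaussianReal_Ioi (z : ℝ) :
    ENNReal.ofReal (stdNormCDF (-z)) = gaussianReal 0 1 (Ioi z) := by
  have h := gaussianReal_map_neg (μ := 0) (v := 1)
  rw [neg_zero] at h
  rw [ofReal_stdNormCDF_eq_gaussianReal_Iio, ← congrArg (· (Iio (-z))) h,
    Measure.map_apply measurable_neg measurableSet_Iio]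
  congr 1
  ext t
  simp

variable {a b : ℝ}

theorem gaussianReal_Iio_eq_ofReal_stdNormCDF (hb : 0 < b) (c : ℝ) :
    gaussianReal a (b ^ 2).toNNReal (Iio c) = ENNReal.ofReal (stdNormCDF ((c - a) / b)) := by
  rw [← gaussianReal_zero_one_map_affine, Measure.map_apply (by fun_prop) measurableSet_Iio,
    ofReal_stdNormCDF_eq_gaussianReal_Iio]
  congr 1
  ext t
  simp only [mem_preimage, mem_Iio, lt_div_iff₀ hb]
  constructor <;> intro <;> linarith

theorem gaussianReal_Ioi_eq_ofReal_stdNormCDF (hb : 0 < b) (c : ℝ) :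
    gaussianReal a (b ^ 2).toNNReal (Ioi c) = ENNReal.ofReal (stdNormCDF ((a - c) / b)) := by
  rw [← gaussianReal_zero_one_map_affine, Measure.map_apply (by fun_prop) measurableSet_Ioi,
    show (a - c) / b = -((c - a) / b) by ring, ofReal_stdNormCDF_neg_eq_gaussianReal_Ioi]
  congr 1
  ext t
  simp only [mem_preimage, mem_Ioi, div_lt_iff₀ hb]
  constructor <;> intro <;> linarith

end stdNormCDF

section gauss

variable {d : ℕ}

theorem measurable_gaussPdf (m : EuclideanSpace ℝ (Fin d)) (σ : ℝ) :
    Measurable (gaussPdf d m σ) := by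
  unfold gaussPdf
  fun_prop

theorem gaussPdf_eq_prod (m : EuclideanSpace ℝ (Fin d)) (σ : ℝ) (x : EuclideanSpace ℝ (Fin d)) :
    gaussPdf d m σ x = ∏ i, gaussianPDFReal (m i) (σ ^ 2).toNNReal (x i) := by
  have h2πσ : 0 ≤ 2 * π * σ ^ 2 := by positivity
  simp only [gaussPdf, gaussianPDFReal_def, Real.coe_toNNReal _ (sq_nonneg σ),
    Finset.prod_mul_distrib, Finset.prod_const, Finset.card_univ, Fintype.card_fin,
    ← Real.exp_sum, EuclideanSpace.real_norm_sq_eq, PiLp.sub_apply, ← Finset.sum_div,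
    ← Finset.sum_neg_distrib]
  congr 1
  rw [Real.sqrt_eq_rpow, ← Real.rpow_neg_one, ← Real.rpow_mul h2πσ,
    ← Real.rpow_mul_natCast h2πσ]
  ring_nf

theorem gauss_eq_map_pi (m : EuclideanSpace ℝ (Fin d)) {σ : ℝ} (hσ : σ ≠ 0) :
    gauss d m σ =
      (Measure.pi fun i => gaussianReal (m i) (σ ^ 2).toNNReal).map (WithLp.toLp 2) := by
  have hv : (σ ^ 2).toNNReal ≠ 0 := by
    rw [Ne, Real.toNNReal_eq_zero, not_le]
    positivity
  simp_rw [gaussianReal_of_var_ne_zero _ hv, gaussianPDF_def]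
  rw [Measure.pi_withDensity_ofReal _ (fun i => gaussianPDFReal_nonneg _ _)
    (fun i => integrable_gaussianPDFReal _ _)]
  ext s hs
  rw [Measure.map_apply (by fun_prop) hs, withDensity_apply _ (hs.preimage (by fun_prop)), gauss,
    withDensity_apply _ hs, ← (PiLp.volume_preserving_toLp _).setLIntegral_comp_preimage hs
      (measurable_gaussPdf m σ).ennreal_ofReal]
  simp [gaussPdf_eq_prod, volume_pi]

theorem gauss_eq_map_stdGaussian (m : EuclideanSpace ℝ (Fin d)) {σ : ℝ} (hσ : σ ≠ 0) :
    gauss d m σ = (stdGaussian (EuclideanSpace ℝ (Fin d))).map (fun z => m + σ • z) := by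
  have h : (fun z => m + σ • z) ∘ WithLp.toLp 2 =
      WithLp.toLp 2 ∘ fun (y : Fin d → ℝ) i => m i + σ * y i := by
    ext
    simp
  rw [← map_pi_eq_stdGaussian, Measure.map_map (by fun_prop) (by fun_prop), h,
    ← Measure.map_map (by fun_prop) (by fun_prop),
    Measure.pi_map_pi (f := fun i t => m i + σ * t) (fun i => by fun_prop),
    gauss_eq_map_pi m hσ]
  simp_rw [gaussianReal_zero_one_map_affine]

theorem gauss_map_inner (m u : EuclideanSpace ℝ (Fin d)) {σ : ℝ} (hσ : σ ≠ 0) :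
    (gauss d m σ).map (fun x => ⟪u, x⟫) = gaussianReal ⟪u, m⟫ ((σ * ‖u‖) ^ 2).toNNReal := by
  have hstd : (stdGaussian (EuclideanSpace ℝ (Fin d))).map (innerSL ℝ u) =
      gaussianReal 0 (‖u‖ ^ 2).toNNReal := by
    rw [IsGaussian.map_eq_gaussianReal, integral_strongDual_stdGaussian,
      variance_dual_stdGaussian, innerSL_apply_norm]
  have h : (fun x => ⟪u, x⟫) ∘ (fun z => m + σ • z) = (fun t => ⟪u, m⟫ + σ * t) ∘ innerSL ℝ u := by
    ext
    simp [inner_add_right, inner_smul_right]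
  rw [gauss_eq_map_stdGaussian m hσ, Measure.map_map (by fun_prop) (by fun_prop), h,
    ← Measure.map_map (by fun_prop) (by fun_prop), hstd, ← gaussianReal_zero_one_map_affine,
    Measure.map_map (by fun_prop) (by fun_prop), ← gaussianReal_zero_one_map_affine]
  congr 1
  ext
  simp only [Function.comp_apply]
  ring

theorem gauss_setOf_inner_lt (m : EuclideanSpace ℝ (Fin d)) {u : EuclideanSpace ℝ (Fin d)}
    (hu : u ≠ 0) {σ : ℝ} (hσ : 0 < σ) (c : ℝ) :
    gauss d m σ {x | ⟪u, x⟫ < c} = ENNReal.ofReal (stdNormCDF ((c - ⟪u, m⟫) / (σ * ‖u‖))) := by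
  rw [← gaussianReal_Iio_eq_ofReal_stdNormCDF (by positivity), ← gauss_map_inner m u hσ.ne',
    Measure.map_apply (by fun_prop) measurableSet_Iio]
  rfl

theorem gauss_setOf_lt_inner (m : EuclideanSpace ℝ (Fin d)) {u : EuclideanSpace ℝ (Fin d)}
    (hu : u ≠ 0) {σ : ℝ} (hσ : 0 < σ) (c : ℝ) :
    gauss d m σ {x | c < ⟪u, x⟫} = ENNReal.ofReal (stdNormCDF ((⟪u, m⟫ - c) / (σ * ‖u‖))) := by
  rw [← gaussianReal_Ioi_eq_ofReal_stdNormCDF (by positivity), ← gauss_map_inner m u hσ.ne',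
    Measure.map_apply (by fun_prop) measurableSet_Ioi]
  rfl

theorem gaussPdf_lt_mul_gaussPdf_iff (m m' x : EuclideanSpace ℝ (Fin d)) {σ : ℝ} (hσ : σ ≠ 0)
    {c : ℝ} (hc : 0 < c) :
    gaussPdf d m σ x < c * gaussPdf d m' σ x ↔ ‖x - m'‖ ^ 2 < ‖x - m‖ ^ 2 + 2 * σ ^ 2 * log c := by
  have hσ2 : 0 < 2 * σ ^ 2 := by positivity
  rw [gaussPdf, gaussPdf, mul_left_comm, mul_lt_mul_iff_right₀ (by positivity),
    ← Real.exp_log hc, ← Real.exp_add, Real.exp_lt_exp, Real.log_exp,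
    show log c + -‖x - m'‖ ^ 2 / (2 * σ ^ 2) = (2 * σ ^ 2 * log c - ‖x - m'‖ ^ 2) / (2 * σ ^ 2) by
      field_simp; ring,
    div_lt_div_iff_of_pos_right hσ2]
  constructor <;> intro <;> linarith

end gauss

theorem mda_err_pos_general (d : ℕ) (μv : EuclideanSpace ℝ (Fin d)) (hμ : μv ≠ 0)
    (σ p : ℝ) (hσ : 0 < σ) (hp1 : 1 / 2 < p) (hp2 : p < 1) :
    ((gauss d μv σ) {x | gaussPdf d μv σ x < p * gaussPdf d (-μv) σ x ∨
        gaussPdf d μv σ x < (1 - p) * gaussPdf d ((3 : ℝ) • μv) σ x}).toReal ≤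
      stdNormCDF (-‖μv‖ / σ + σ * Real.log p / (2 * ‖μv‖))
        + stdNormCDF (-‖μv‖ / σ + σ * Real.log (1 - p) / (2 * ‖μv‖)) := by
  have hevent : {x | gaussPdf d μv σ x < p * gaussPdf d (-μv) σ x ∨
        gaussPdf d μv σ x < (1 - p) * gaussPdf d ((3 : ℝ) • μv) σ x} =
      {x | ⟪μv, x⟫ < σ ^ 2 * log p / 2} ∪
        {x | 2 * ‖μv‖ ^ 2 - σ ^ 2 * log (1 - p) / 2 < ⟪μv, x⟫} := by
    ext x
    simp only [mem_ofPred_eq, mem_union,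
      gaussPdf_lt_mul_gaussPdf_iff _ _ _ hσ.ne' (by linarith : 0 < p),
      gaussPdf_lt_mul_gaussPdf_iff _ _ _ hσ.ne' (by linarith : 0 < 1 - p),
      norm_sub_sq_real, inner_neg_right, inner_smul_right, norm_neg, norm_smul, Real.norm_ofNat,
      real_inner_comm x]
    refine or_congr ?_ ?_ <;> constructor <;> intro <;> linarith
  have hunion := measure_union_le (μ := gauss d μv σ) {x | ⟪μv, x⟫ < σ ^ 2 * log p / 2}
    {x | 2 * ‖μv‖ ^ 2 - σ ^ 2 * log (1 - p) / 2 < ⟪μv, x⟫}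
  rw [gauss_setOf_inner_lt μv hμ hσ, gauss_setOf_lt_inner μv hμ hσ,
    real_inner_self_eq_norm_sq] at hunion
  rw [hevent]
  refine (ENNReal.toReal_mono (by simp) hunion).trans_eq ?_
  rw [ENNReal.toReal_add ENNReal.ofReal_ne_top ENNReal.ofReal_ne_top,
    ENNReal.toReal_ofReal (stdNormCDF_nonneg _), ENNReal.toReal_ofReal (stdNormCDF_nonneg _)]
  congr 2 <;> field_simp <;> ring

/-- For `X ∼ N(μ, σ²I)`, the probability that the MDA classifier assigns label
`−1` to `X` is at most `Φ(−‖μ‖/σ + σ ln p/(2‖μ‖)) + Φ(−‖μ‖/σ + σ ln(1−p)/(2‖μ‖))`. -/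
theorem mda_err_pos (d : ℕ) (hd : 1 ≤ d) (μv : EuclideanSpace ℝ (Fin d)) (hμ : μv ≠ 0)
    (σ p : ℝ) (hσ : 0 < σ) (hp1 : 1 / 2 < p) (hp2 : p < 1) :
    ((gauss d μv σ) {x | gaussPdf d μv σ x < p * gaussPdf d (-μv) σ x ∨
        gaussPdf d μv σ x < (1 - p) * gaussPdf d ((3 : ℝ) • μv) σ x}).toReal ≤
      stdNormCDF (-‖μv‖ / σ + σ * Real.log p / (2 * ‖μv‖))
        + stdNormCDF (-‖μv‖ / σ + σ * Real.log (1 - p) / (2 * ‖μv‖)) :=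
  mda_err_pos_general d μv hμ σ p hσ hp1 hp2
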